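/- arXiv:1810.12599 — 7 statements merged into one kernel-verified Lean document; each statement's English description precedes it below -/
import Mathlib

section
/- For every τ ∈ A₀ and every b ∈ I_τ, the map φ_b maps X into X: for all z ∈ ℂ with |z − 1/2| ≤ 1/2, one has z + b ≠ 0 and |1/(z + b) − 1/2| ≤ 1/2. -/
/-! Inversion maps the closed half-plane `1 ≤ re w` into the disc `X`, since that half-plane is the
set of points at least as close to `2` as to `0`. The point `z + b` lies in it because
`0 ≤ re z` on `X` and `1 ≤ re b` on `I_τ`. -/

open Complex Metric Filter Set
open scoped ENNReal NNReal Topology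

noncomputable section

/-- The parameter space `A₀ = {u+iv : u ≥ 0, v ≥ 1}`. -/
def A0 : Set ℂ := {τ : ℂ | 0 ≤ τ.re ∧ 1 ≤ τ.im}

/-- The phase space `X = {z : |z - 1/2| ≤ 1/2}`. -/
def Xcl : Set ℂ := {z : ℂ | ‖z - 1/2‖ ≤ 1/2}

/-- The alphabet `I_τ = {m + nτ : m, n ∈ ℕ₊}`. -/
def Itau (τ : ℂ) : Set ℂ := {b : ℂ | ∃ m n : ℕ+, b = ((m : ℕ) : ℂ) + ((n : ℕ) : ℂ) * τ}

/-- The generator `φ_b(z) = 1/(z+b)`. -/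
def phi (b z : ℂ) : ℂ := 1 / (z + b)


lemma re_nonneg_of_mem_Xcl {z : ℂ} (hz : z ∈ Xcl) : 0 ≤ z.re := by
  have h := (abs_le.mp ((Complex.abs_re_le_norm (z - 1/2)).trans hz)).1
  norm_num at h
  linarith

lemma one_le_re_of_mem_Itau {τ b : ℂ} (hτ : 0 ≤ τ.re) (hb : b ∈ Itau τ) : 1 ≤ b.re := by
  obtain ⟨m, n, rfl⟩ := hb
  have hm : (1 : ℝ) ≤ (m : ℕ) := Nat.one_le_cast.mpr m.pos
  simp only [add_re, mul_re, natCast_re, natCast_im, zero_mul, sub_zero]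
  nlinarith [(n : ℕ).cast_nonneg (α := ℝ)]

lemma norm_one_div_sub_half_le_half_iff {w : ℂ} (hw : w ≠ 0) :
    ‖1 / w - 1/2‖ ≤ 1/2 ↔ 1 ≤ w.re := by
  have hw' : 0 < ‖w‖ := norm_pos_iff.mpr hw
  have hdiv : 1 / w - 1/2 = (2 - w) / (2 * w) := by field_simp
  rw [hdiv, norm_div, norm_mul, Complex.norm_two, div_le_iff₀ (mul_pos two_pos hw')]
  rw [show 1 / 2 * (2 * ‖w‖) = ‖w‖ by ring, ← sq_le_sq₀ (norm_nonneg _) hw'.le,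
    Complex.sq_norm, Complex.sq_norm, normSq_apply, normSq_apply]
  simp only [sub_re, sub_im, re_ofNat, im_ofNat]
  constructor <;> intro h <;> nlinarith

/-- For every `τ ∈ A₀` and `b ∈ I_τ`, the map `φ_b` sends `X` into `X`. -/
theorem stmt0 :
    ∀ τ ∈ A0, ∀ b ∈ Itau τ, ∀ z ∈ Xcl,
      z + b ≠ 0 ∧ ‖1 / (z + b) - 1/2‖ ≤ 1/2 := by
  rintro τ ⟨hτ, -⟩ b hb z hz
  have hre : 1 ≤ (z + b).re := by
    rw [add_re]
    linarith [re_nonneg_of_mem_Xcl hz, one_le_re_of_mem_Itau hτ hb]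
  have hne : z + b ≠ 0 := fun h => by norm_num [h] at hre
  exact ⟨hne, (norm_one_div_sub_half_le_half_iff hne).mpr hre⟩
end
end

section
/- For every τ ∈ A₀ there exist a radius r₁ with 1/2 < r₁ < 1 and a constant C ≥ 1 such that for every b ∈ I_τ and all z, z′ in the open ball V := B(1/2, r₁), one has z + b ≠ 0, z′ + b ≠ 0, and |φ_b′(z)| ≤ C·|φ_b′(z′)|, where φ_b′(z) = −1/(z + b)² (bounded distortion property for the generators of S_τ). -/
open Complex Metric Filter Set
open scoped ENNReal NNReal Topology

noncomputable section

lemma key_lb {τ : ℂ} (hτ : τ ∈ A0) {b : ℂ} (hb : b ∈ Itau τ) {z : ℂ}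
    (hz : z ∈ ball (1/2 : ℂ) (3/4)) : (3:ℝ)/4 ≤ ‖z + b‖ := by
  obtain ⟨m, n, rfl⟩ := hb
  obtain ⟨hre, him⟩ := hτ
  have hm : (1:ℝ) ≤ (m:ℕ) := by exact_mod_cast m.one_le
  have hn : (1:ℝ) ≤ (n:ℕ) := by exact_mod_cast n.one_le
  have hzre : -(1/4 : ℝ) ≤ z.re := by
    have h1 : ‖z - 1/2‖ < 3/4 := by
      simpa [dist_eq_norm] using hz
    have h2 : |(z - 1/2).re| ≤ ‖z - 1/2‖ := Complex.abs_re_le_norm _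
    have : (z - 1/2 : ℂ).re = z.re - 1/2 := by simp
    rw [this] at h2
    have := abs_le.mp (le_of_lt (lt_of_le_of_lt h2 h1))
    linarith [this.1]
  have hre' : (3:ℝ)/4 ≤ (z + (((m : ℕ) : ℂ) + ((n : ℕ) : ℂ) * τ)).re := by
    simp only [Complex.add_re, Complex.mul_re, Complex.natCast_re, Complex.natCast_im]
    have : (0:ℝ) ≤ (n:ℕ) * τ.re := by positivity
    nlinarith
  calc (3:ℝ)/4 ≤ (z + (((m : ℕ) : ℂ) + ((n : ℕ) : ℂ) * τ)).re := hre'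
    _ ≤ ‖z + (((m : ℕ) : ℂ) + ((n : ℕ) : ℂ) * τ)‖ := Complex.re_le_norm _

/-- Bounded distortion property for the generators of `S_τ` on a ball `V = B(1/2, r₁)`. -/
theorem stmt3 :
    ∀ τ ∈ A0, ∃ r₁ : ℝ, 1/2 < r₁ ∧ r₁ < 1 ∧ ∃ C : ℝ, 1 ≤ C ∧
      ∀ b ∈ Itau τ, ∀ z ∈ ball (1/2 : ℂ) r₁, ∀ z' ∈ ball (1/2 : ℂ) r₁,
        z + b ≠ 0 ∧ z' + b ≠ 0 ∧ ‖-1 / (z + b) ^ 2‖ ≤ C * ‖-1 / (z' + b) ^ 2‖ := by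
  intro τ hτ
  refine ⟨3/4, by norm_num, by norm_num, 9, by norm_num, ?_⟩
  intro b hb z hz z' hz'
  have h1 := key_lb hτ hb hz
  have h2 := key_lb hτ hb hz'
  have hne : z + b ≠ 0 := by
    intro h; rw [h] at h1; norm_num at h1
  have hne' : z' + b ≠ 0 := by
    intro h; rw [h] at h2; norm_num at h2
  refine ⟨hne, hne', ?_⟩
  have hdist : ‖z' + b‖ ≤ ‖z + b‖ + 3/2 := by
    have : ‖z' + b‖ ≤ ‖z + b‖ + ‖z' - z‖ := by
      have : z' + b = (z + b) + (z' - z) := by ring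
      rw [this]; exact norm_add_le _ _
    have hzz : ‖z' - z‖ ≤ ‖z' - 1/2‖ + ‖z - 1/2‖ := by
      have : z' - z = (z' - 1/2) - (z - 1/2) := by ring
      rw [this]; exact norm_sub_le _ _
    have ha : ‖z - 1/2‖ < 3/4 := by simpa [dist_eq_norm] using hz
    have hb' : ‖z' - 1/2‖ < 3/4 := by simpa [dist_eq_norm] using hz'
    linarith
  have hle : ‖z' + b‖ ≤ 3 * ‖z + b‖ := by linarith
  rw [norm_div, norm_div, norm_neg, norm_one, norm_pow, norm_pow]
  have hq : (0:ℝ) < ‖z' + b‖ ^ 2 := by positivity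
  rw [div_le_iff₀ (by positivity)]
  rw [show (9:ℝ) * (1 / ‖z' + b‖ ^ 2) * ‖z + b‖ ^ 2 = 9 * ‖z + b‖ ^ 2 / ‖z' + b‖ ^ 2 by ring,
    le_div_iff₀ hq, one_mul]
  nlinarith [norm_nonneg (z+b), norm_nonneg (z'+b)]
end
end

section
/- For every τ ∈ A₀ there exist an open set V ⊆ ℂ containing X and a constant C ≥ 1 such that for all z ∈ V and all b ∈ I_τ, C⁻¹·|b|⁻² ≤ |φ_b′(z)| ≤ C·|b|⁻², i.e. C⁻¹·|b|⁻² ≤ 1/|z + b|² ≤ C·|b|⁻². -/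
open Complex Metric Filter Set
open scoped ENNReal NNReal Topology

noncomputable section

/-!
Take `V` to be the disc `|z - 1/2| < 3/4`. Every `b ∈ I_τ` has real and imaginary part at least
`1`, while both coordinates of `z ∈ V` lie in `(-3/4, 5/4)`; translating a coordinate `x ≥ 1` by
such an amount multiplies it by a factor between `1/4` and `9/4`, so `|z + b|²` and `|b|²` agree up
to the factor `16`.
-/

lemma one_le_re_and_one_le_im_of_mem_Itau {τ b : ℂ} (hτ : τ ∈ A0) (hb : b ∈ Itau τ) :
    1 ≤ b.re ∧ 1 ≤ b.im := by
  obtain ⟨hre, him⟩ := hτ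
  obtain ⟨m, n, rfl⟩ := hb
  have hm : (1 : ℝ) ≤ (m : ℕ) := Nat.one_le_cast.2 m.pos
  have hn : (1 : ℝ) ≤ (n : ℕ) := Nat.one_le_cast.2 n.pos
  simp only [add_re, add_im, mul_re, mul_im, natCast_re, natCast_im, zero_mul, sub_zero,
    add_zero, zero_add]
  constructor <;> nlinarith

lemma sq_le_sixteen_mul_sq_add {x a : ℝ} (hx : 1 ≤ x) (ha₀ : -3/4 ≤ a) (ha₁ : a ≤ 5/4) :
    x ^ 2 ≤ 16 * (x + a) ^ 2 ∧ (x + a) ^ 2 ≤ 16 * x ^ 2 := by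
  constructor <;> nlinarith

lemma sq_norm_add_comparable {z b : ℂ} (hz : ‖z - 1/2‖ < 3/4) (hre : 1 ≤ b.re)
    (him : 1 ≤ b.im) : ‖b‖ ^ 2 ≤ 16 * ‖z + b‖ ^ 2 ∧ ‖z + b‖ ^ 2 ≤ 16 * ‖b‖ ^ 2 := by
  have hz_re : |z.re - 1/2| < 3/4 := by
    simpa using (abs_re_le_norm (z - 1/2)).trans_lt hz
  have hz_im : |z.im| < 3/4 := by
    simpa using (abs_im_le_norm (z - 1/2)).trans_lt hz
  obtain ⟨hre₀, hre₁⟩ := abs_lt.1 hz_re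
  obtain ⟨him₀, him₁⟩ := abs_lt.1 hz_im
  obtain ⟨hx₀, hx₁⟩ := sq_le_sixteen_mul_sq_add hre (a := z.re) (by linarith) (by linarith)
  obtain ⟨hy₀, hy₁⟩ := sq_le_sixteen_mul_sq_add him (a := z.im) (by linarith) (by linarith)
  simp only [Complex.sq_norm, normSq_apply, add_re, add_im, ← sq]
  constructor <;> linarith

lemma inv_le_inv_mul_and_inv_le_mul_inv {a b C : ℝ} (ha : 0 < a) (hb : 0 < b)
    (hab : a ≤ C * b) (hba : b ≤ C * a) : C⁻¹ * b⁻¹ ≤ a⁻¹ ∧ a⁻¹ ≤ C * b⁻¹ := by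
  have hC : 0 < C := pos_of_mul_pos_left (ha.trans_le hab) hb.le
  constructor
  · rw [← mul_inv]
    exact inv_anti₀ ha hab
  · rw [inv_le_iff_one_le_mul₀ ha, mul_comm C, mul_assoc, ← div_eq_inv_mul,
      one_le_div₀ hb]
    exact hba

/-- Two-sided estimate `C⁻¹|b|⁻² ≤ |φ_b'(z)| ≤ C|b|⁻²` on a neighborhood `V` of `X`. -/
theorem stmt4 :
    ∀ τ ∈ A0, ∃ V : Set ℂ, IsOpen V ∧ Xcl ⊆ V ∧ ∃ C : ℝ, 1 ≤ C ∧
      ∀ z ∈ V, ∀ b ∈ Itau τ,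
        C⁻¹ * (‖b‖ ^ 2)⁻¹ ≤ 1 / ‖z + b‖ ^ 2 ∧ 1 / ‖z + b‖ ^ 2 ≤ C * (‖b‖ ^ 2)⁻¹ := by
  intro τ hτ
  refine ⟨ball (1/2) (3/4), isOpen_ball,
    fun z hz => mem_ball_iff_norm.2 (hz.trans_lt (by norm_num)), 16, by norm_num, ?_⟩
  intro z hz b hb
  obtain ⟨hre, him⟩ := one_le_re_and_one_le_im_of_mem_Itau hτ hb
  obtain ⟨hb_le, hzb_le⟩ := sq_norm_add_comparable (mem_ball_iff_norm.1 hz) hre him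
  have hb_pos : 0 < ‖b‖ ^ 2 := by
    have : b ≠ 0 := fun h => by simp [h] at hre; linarith
    positivity
  rw [one_div]
  exact inv_le_inv_mul_and_inv_le_mul_inv (by linarith) hb_pos hzb_le hb_le
end
end

section
/- For every τ ∈ A₀ and every t ≥ 0, the following upper estimate holds in [0, ∞]: Σ_{(m,n) ∈ ℕ₊×ℕ₊} |m + nτ|^{−2t} ≤ 3 · Σ_{p=1}^{∞} 4^{(p−1)(1−t)} · ( min{ 1 + |τ|²/4^{p−1}, |τ|² } )^{−t}. -/
open Complex Metric Filter Set
open scoped ENNReal NNReal Topology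

noncomputable section

/-! Sort the pairs `(m, n)` into the dyadic shells `2^k ≤ max m n < 2^(k+1)`, `k = p - 1`.
Since `Re τ ≥ 0`, `|m + nτ|² ≥ m² + n²|τ|²`, which on the `k`-th shell is at least
`min (4^k + |τ|²) (4^k |τ|²) = 4^k · min (1 + |τ|²/4^k) |τ|²`. The shell has at most `3 · 4^k`
elements, so its contribution is at most `3 · 4^k · (4^k · min (1 + |τ|²/4^k) |τ|²)^(-t)`, the
`p`-th term on the right. -/

lemma sq_add_sq_mul_sq_norm_le_sq_norm {τ : ℂ} (hτ : 0 ≤ τ.re) {x y : ℝ} (hx : 0 ≤ x)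
    (hy : 0 ≤ y) : x ^ 2 + y ^ 2 * ‖τ‖ ^ 2 ≤ ‖(x : ℂ) + y * τ‖ ^ 2 := by
  have hexpand : ‖(x : ℂ) + y * τ‖ ^ 2 = x ^ 2 + 2 * x * y * τ.re + y ^ 2 * ‖τ‖ ^ 2 := by
    simp only [Complex.sq_norm, Complex.normSq_apply, Complex.add_re, Complex.add_im,
      Complex.mul_re, Complex.mul_im, Complex.ofReal_re, Complex.ofReal_im]
    ring
  rw [hexpand]
  nlinarith [mul_nonneg (mul_nonneg hx hy) hτ]

lemma min_sq_add_le_sq_norm {τ : ℂ} (hτ : 0 ≤ τ.re) {x y R : ℝ} (hx : 0 ≤ x) (hy : 1 ≤ y)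
    (hR : 0 ≤ R) (hRxy : R ≤ max x y) :
    min (R ^ 2 + ‖τ‖ ^ 2) (R ^ 2 * ‖τ‖ ^ 2) ≤ ‖(x : ℂ) + y * τ‖ ^ 2 := by
  refine le_trans ?_ (sq_add_sq_mul_sq_norm_le_sq_norm hτ hx (by linarith))
  have hT : 0 ≤ ‖τ‖ ^ 2 := by positivity
  rcases le_max_iff.mp hRxy with hRx | hRy
  · refine (min_le_left _ _).trans (add_le_add ?_ ?_)
    · exact pow_le_pow_left₀ hR hRx 2
    · exact le_mul_of_one_le_left hT (one_le_pow₀ hy)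
  · refine (min_le_right _ _).trans (le_add_of_nonneg_of_le (sq_nonneg x) ?_)
    exact mul_le_mul_of_nonneg_right (pow_le_pow_left₀ hR hRy 2) hT

def dyadicIndex (q : ℕ+ × ℕ+) : ℕ := Nat.log 2 (max (q.1 : ℕ) q.2)

lemma dyadicIndex_eq_iff {q : ℕ+ × ℕ+} {k : ℕ} :
    dyadicIndex q = k ↔ 2 ^ k ≤ max (q.1 : ℕ) q.2 ∧ max (q.1 : ℕ) q.2 < 2 ^ (k + 1) :=
  Nat.log_eq_iff (Or.inr ⟨one_lt_two, (lt_max_of_lt_left q.1.pos).ne'⟩)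

def dyadicShell (k : ℕ) : Finset (ℕ × ℕ) :=
  (Finset.range (2 ^ (k + 1)) ×ˢ Finset.range (2 ^ (k + 1))) \
    (Finset.range (2 ^ k) ×ˢ Finset.range (2 ^ k))

lemma card_dyadicShell (k : ℕ) : (dyadicShell k).card = 3 * 4 ^ k := by
  rw [dyadicShell, Finset.card_sdiff_of_subset (Finset.product_subset_product
      (Finset.range_subset_range.mpr (Nat.pow_le_pow_right two_pos k.le_succ))
      (Finset.range_subset_range.mpr (Nat.pow_le_pow_right two_pos k.le_succ))),
    Finset.card_product, Finset.card_product, Finset.card_range, Finset.card_range,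
    show (4 : ℕ) ^ k = 2 ^ k * 2 ^ k by rw [← mul_pow]; norm_num, pow_succ]
  generalize 2 ^ k = a
  rw [Nat.sub_eq_of_eq_add]
  ring

lemma encard_dyadicIndex_preimage_le (k : ℕ) :
    (dyadicIndex ⁻¹' {k}).encard ≤ 3 * 4 ^ k := by
  have hinj : Function.Injective (Prod.map PNat.val PNat.val) :=
    PNat.coe_injective.prodMap PNat.coe_injective
  have hsub : Prod.map PNat.val PNat.val '' (dyadicIndex ⁻¹' {k}) ⊆ dyadicShell k := by
    rintro _ ⟨q, hq, rfl⟩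
    obtain ⟨hlo, hhi⟩ := dyadicIndex_eq_iff.mp hq
    simp only [dyadicShell, Finset.coe_sdiff, Finset.coe_product, Finset.coe_range,
      Set.mem_sdiff, Set.mem_prod, Set.mem_Iio, Prod.map_fst, Prod.map_snd]
    omega
  calc (dyadicIndex ⁻¹' {k}).encard
      = (Prod.map PNat.val PNat.val '' (dyadicIndex ⁻¹' {k})).encard :=
        (hinj.encard_image _).symm
    _ ≤ (dyadicShell k : Set (ℕ × ℕ)).encard := Set.encard_mono hsub
    _ = 3 * 4 ^ k := by rw [Set.encard_coe_eq_coe_finsetCard, card_dyadicShell]; norm_cast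

lemma enorm_rpow_neg_two_mul_le {E : Type*} [SeminormedAddGroup E] {z : E} {t D : ℝ}
    (ht : 0 ≤ t) (hD : D ≤ ‖z‖ ^ 2) :
    (‖z‖₊ : ℝ≥0∞) ^ (-(2 * t)) ≤ ENNReal.ofReal D ^ (-t) := by
  have hz : (‖z‖₊ : ℝ≥0∞) ^ (-(2 * t)) = ENNReal.ofReal (‖z‖ ^ 2) ^ (-t) := by
    rw [← enorm_eq_nnnorm, ← ofReal_norm, neg_mul_eq_mul_neg, ENNReal.rpow_mul,
      ENNReal.ofReal_rpow_of_nonneg (norm_nonneg z) zero_le_two, Real.rpow_two]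
  rw [hz, ENNReal.rpow_neg, ENNReal.rpow_neg]
  exact ENNReal.inv_le_inv.mpr (ENNReal.rpow_le_rpow (ENNReal.ofReal_le_ofReal hD) ht)

lemma ofReal_mul_ofReal_mul_rpow_neg {x : ℝ} (hx : 0 < x) (M t : ℝ) :
    ENNReal.ofReal x * ENNReal.ofReal (x * M) ^ (-t) =
      ENNReal.ofReal x ^ (1 - t) * ENNReal.ofReal M ^ (-t) := by
  have hx0 : ENNReal.ofReal x ≠ 0 := ENNReal.ofReal_ne_zero_iff.mpr hx
  rw [ENNReal.ofReal_mul hx.le, ENNReal.mul_rpow_of_ne_top ENNReal.ofReal_ne_top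
      ENNReal.ofReal_ne_top, sub_eq_add_neg, ENNReal.rpow_add _ _ hx0 ENNReal.ofReal_ne_top,
    ENNReal.rpow_one, mul_assoc]

lemma tsum_dyadicIndex_preimage_le {τ : ℂ} (hτ : 0 ≤ τ.re) {t : ℝ} (ht : 0 ≤ t) (k : ℕ) :
    ∑' q : dyadicIndex ⁻¹' {k},
        (‖(((q : ℕ+ × ℕ+).1 : ℕ) : ℂ) + (((q : ℕ+ × ℕ+).2 : ℕ) : ℂ) * τ‖₊ : ℝ≥0∞) ^ (-(2 * t)) ≤
      3 * ((4 : ℝ≥0∞) ^ ((k : ℝ) * (1 - t)) *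
        ENNReal.ofReal (min (1 + ‖τ‖ ^ 2 / (4 : ℝ) ^ k) (‖τ‖ ^ 2)) ^ (-t)) := by
  set M := min (1 + ‖τ‖ ^ 2 / (4 : ℝ) ^ k) (‖τ‖ ^ 2)
  have hshell : ∀ q ∈ dyadicIndex ⁻¹' {k},
      (4 : ℝ) ^ k * M ≤ ‖((q.1 : ℕ) : ℂ) + ((q.2 : ℕ) : ℂ) * τ‖ ^ 2 := by
    intro q hq
    have hsq : ((2 : ℝ) ^ k) ^ 2 = 4 ^ k := by rw [← pow_mul, mul_comm, pow_mul]; norm_num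
    rw [mul_min_of_nonneg _ _ (by positivity), mul_add, mul_one,
      mul_div_cancel₀ _ (by positivity), ← hsq]
    simpa only [Complex.ofReal_natCast] using min_sq_add_le_sq_norm hτ (x := (q.1 : ℕ))
      (y := (q.2 : ℕ)) (Nat.cast_nonneg _) (by exact_mod_cast q.2.pos) (by positivity)
      (by exact_mod_cast (dyadicIndex_eq_iff.mp hq).1)
  have hofReal : ENNReal.ofReal ((4 : ℝ) ^ k) = 4 ^ k := by
    rw [ENNReal.ofReal_pow zero_le_four, ENNReal.ofReal_ofNat]
  calc _ ≤ ∑' _ : dyadicIndex ⁻¹' {k}, ENNReal.ofReal ((4 : ℝ) ^ k * M) ^ (-t) :=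
        ENNReal.tsum_le_tsum fun q => enorm_rpow_neg_two_mul_le ht (hshell q q.2)
    _ = (dyadicIndex ⁻¹' {k}).encard * ENNReal.ofReal ((4 : ℝ) ^ k * M) ^ (-t) :=
        ENNReal.tsum_set_const _ _
    _ ≤ 3 * ENNReal.ofReal ((4 : ℝ) ^ k) * ENNReal.ofReal ((4 : ℝ) ^ k * M) ^ (-t) := by
        rw [hofReal]
        gcongr
        exact_mod_cast encard_dyadicIndex_preimage_le k
    _ = _ := by
        rw [mul_assoc, ofReal_mul_ofReal_mul_rpow_neg (by positivity), hofReal,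
          ← ENNReal.rpow_natCast, ← ENNReal.rpow_mul]

/-- Upper estimate for `Σ_{b ∈ I_τ} |b|^{-2t}` in `[0,∞]`. -/
theorem stmt5 :
    ∀ τ ∈ A0, ∀ t : ℝ, 0 ≤ t →
      (∑' p : ℕ+ × ℕ+,
          ((‖((p.1 : ℕ) : ℂ) + ((p.2 : ℕ) : ℂ) * τ‖₊ : ℝ≥0∞) ^ (-(2 * t)))) ≤
        3 * ∑' p : ℕ+,
          (4 : ℝ≥0∞) ^ ((((p : ℕ) : ℝ) - 1) * (1 - t)) *
            (ENNReal.ofReal (min (1 + ‖τ‖ ^ 2 / (4 : ℝ) ^ (((p : ℕ) : ℝ) - 1)) (‖τ‖ ^ 2))) ^ (-t) := by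
  intro τ hτ t ht
  rw [← ENNReal.tsum_fiberwise _ dyadicIndex, ← ENNReal.tsum_mul_left,
    ← Equiv.pnatEquivNat.symm.tsum_eq]
  refine ENNReal.tsum_le_tsum fun k => ?_
  simpa [Real.rpow_natCast] using tsum_dyadicIndex_preimage_le hτ.1 ht k
end
end

section
/- For every τ ∈ A₀ and every t ≥ 0, the following lower estimate holds in [0, ∞]: Σ_{(m,n) ∈ ℕ₊×ℕ₊} |m + nτ|^{−2t} ≥ (1/4) · Σ_{p=1}^{∞} 4^{p(1−t)} · (1 + |τ|)^{−2t}. -/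
open Complex Metric Filter Set
open scoped ENNReal NNReal Topology

noncomputable section

/-!
Split `ℕ₊ × ℕ₊` into the disjoint dyadic squares `B_k × B_k`, `B_k = (2^k, 2^(k+1)]`. Such a square
has `4^k` points, each with `|m + nτ| ≤ 2^(k+1) (1 + |τ|)`, so it contributes at least
`4^k 2^(-2(k+1)t) (1 + |τ|)^(-2t) = ¼ 4^((k+1)(1-t)) (1 + |τ|)^(-2t)`, the `p = k + 1` term.
-/

open scoped Function

theorem ENNReal.tsum_sum_le_tsum_of_pairwise_disjoint {ι α : Type*} {s : ι → Finset α}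
    (hs : Pairwise (Disjoint on s)) (f : α → ℝ≥0∞) :
    ∑' i, ∑ a ∈ s i, f a ≤ ∑' a, f a := by
  classical
  rw [ENNReal.tsum_eq_iSup_sum]
  refine iSup_le fun T => ?_
  rw [← Finset.sum_biUnion (hs.set_pairwise _)]
  exact ENNReal.sum_le_tsum _

theorem ENNReal.rpow_neg_le_rpow_neg {x y : ℝ≥0∞} (hxy : x ≤ y) {z : ℝ} (hz : 0 ≤ z) :
    y ^ (-z) ≤ x ^ (-z) := by
  rw [ENNReal.rpow_neg, ENNReal.rpow_neg]
  gcongr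

def dyadicBlock (k : ℕ) : Finset ℕ+ := Finset.Ioc (2 ^ k) (2 ^ (k + 1))

lemma card_dyadicBlock (k : ℕ) : (dyadicBlock k).card = 2 ^ k := by
  rw [dyadicBlock, PNat.card_Ioc, PNat.pow_coe, PNat.pow_coe, PNat.val_ofNat, pow_succ]
  omega

lemma pairwise_disjoint_dyadicBlock : Pairwise (Disjoint on dyadicBlock) := by
  have := (pow_right_monotone (by decide : (1 : ℕ+) ≤ 2)).pairwise_disjoint_on_Ioc_succ
  intro k l hkl
  rw [Function.onFun, ← Finset.disjoint_coe, dyadicBlock, dyadicBlock, Finset.coe_Ioc,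
    Finset.coe_Ioc]
  simpa using this hkl

lemma norm_natCast_add_natCast_mul_le (τ : ℂ) {m n N : ℕ} (hm : m ≤ N) (hn : n ≤ N) :
    ‖(m : ℂ) + n * τ‖ ≤ N * (1 + ‖τ‖) := by
  calc ‖(m : ℂ) + n * τ‖ ≤ m + n * ‖τ‖ := by
        simpa [Complex.norm_natCast] using norm_add_le (m : ℂ) (n * τ)
    _ ≤ N + N * ‖τ‖ := by gcongr
    _ = N * (1 + ‖τ‖) := by ring

lemma rpow_neg_le_nnnorm_natCast_add_natCast_mul (τ : ℂ) {m n N : ℕ} (hm : m ≤ N) (hn : n ≤ N)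
    {s : ℝ} (hs : 0 ≤ s) :
    (N : ℝ≥0∞) ^ (-s) * ENNReal.ofReal (1 + ‖τ‖) ^ (-s) ≤ (‖(m : ℂ) + n * τ‖₊ : ℝ≥0∞) ^ (-s) := by
  rw [← ENNReal.mul_rpow_of_ne_top (ENNReal.natCast_ne_top N) ENNReal.ofReal_ne_top]
  refine ENNReal.rpow_neg_le_rpow_neg ?_ hs
  rw [← ENNReal.ofReal_coe_nnreal, coe_nnnorm, ← ENNReal.ofReal_natCast,
    ← ENNReal.ofReal_mul (Nat.cast_nonneg N)]
  exact ENNReal.ofReal_le_ofReal (norm_natCast_add_natCast_mul_le τ hm hn)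

lemma four_pow_mul_two_pow_succ_rpow (k : ℕ) (t : ℝ) :
    (4 : ℝ≥0∞) ^ k * ((2 : ℝ≥0∞) ^ (k + 1)) ^ (-(2 * t)) =
      4⁻¹ * 4 ^ (((k + 1 : ℕ) : ℝ) * (1 - t)) := by
  have h4 : (4 : ℝ≥0∞) = 2 ^ (2 : ℝ) := by norm_num
  rw [h4, ← ENNReal.rpow_natCast, ← ENNReal.rpow_natCast, ← ENNReal.rpow_neg_one,
    ← ENNReal.rpow_mul, ← ENNReal.rpow_mul, ← ENNReal.rpow_mul, ← ENNReal.rpow_mul,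
    ← ENNReal.rpow_add _ _ two_ne_zero ENNReal.ofNat_ne_top,
    ← ENNReal.rpow_add _ _ two_ne_zero ENNReal.ofNat_ne_top]
  congr 1
  push_cast
  ring

lemma le_sum_dyadicBlock_sq (τ : ℂ) {t : ℝ} (ht : 0 ≤ t) (k : ℕ) :
    4⁻¹ * ((4 : ℝ≥0∞) ^ (((k + 1 : ℕ) : ℝ) * (1 - t)) * ENNReal.ofReal (1 + ‖τ‖) ^ (-(2 * t))) ≤
      ∑ p ∈ dyadicBlock k ×ˢ dyadicBlock k,
        (‖((p.1 : ℕ) : ℂ) + ((p.2 : ℕ) : ℂ) * τ‖₊ : ℝ≥0∞) ^ (-(2 * t)) := by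
  have hle : ∀ m ∈ dyadicBlock k, (m : ℕ) ≤ 2 ^ (k + 1) := fun m hm => by
    simpa [← PNat.coe_le_coe] using (Finset.mem_Ioc.mp hm).2
  have hcard : ((dyadicBlock k ×ˢ dyadicBlock k).card : ℝ≥0∞) = 4 ^ k := by
    rw [Finset.card_product, card_dyadicBlock, ← mul_pow]
    norm_num
  calc 4⁻¹ * ((4 : ℝ≥0∞) ^ (((k + 1 : ℕ) : ℝ) * (1 - t)) * ENNReal.ofReal (1 + ‖τ‖) ^ (-(2 * t)))
      = (dyadicBlock k ×ˢ dyadicBlock k).card •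
          (((2 ^ (k + 1) : ℕ) : ℝ≥0∞) ^ (-(2 * t)) * ENNReal.ofReal (1 + ‖τ‖) ^ (-(2 * t))) := by
        rw [nsmul_eq_mul, hcard, ← mul_assoc, ← mul_assoc, Nat.cast_pow, Nat.cast_ofNat,
          four_pow_mul_two_pow_succ_rpow]
    _ ≤ _ := Finset.card_nsmul_le_sum _ _ _ fun p hp =>
        rpow_neg_le_nnnorm_natCast_add_natCast_mul τ (hle _ (Finset.mem_product.mp hp).1)
          (hle _ (Finset.mem_product.mp hp).2) (by positivity)

/-- Lower estimate for `Σ_{b ∈ I_τ} |b|^{-2t}` in `[0,∞]`. -/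
theorem stmt6 :
    ∀ τ ∈ A0, ∀ t : ℝ, 0 ≤ t →
      (∑' p : ℕ+ × ℕ+,
          ((‖((p.1 : ℕ) : ℂ) + ((p.2 : ℕ) : ℂ) * τ‖₊ : ℝ≥0∞) ^ (-(2 * t)))) ≥
        (1/4 : ℝ≥0∞) * ∑' p : ℕ+,
          (4 : ℝ≥0∞) ^ (((p : ℕ) : ℝ) * (1 - t)) * (ENNReal.ofReal (1 + ‖τ‖)) ^ (-(2 * t)) := by
  intro τ _ t ht
  have hdisj : Pairwise (Disjoint on fun k => dyadicBlock k ×ˢ dyadicBlock k) :=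
    fun k l hkl => Finset.disjoint_product.mpr (Or.inl (pairwise_disjoint_dyadicBlock hkl))
  rw [tsum_pnat_eq_tsum_succ (f := fun n : ℕ =>
    (4 : ℝ≥0∞) ^ ((n : ℝ) * (1 - t)) * ENNReal.ofReal (1 + ‖τ‖) ^ (-(2 * t))),
    one_div, ← ENNReal.tsum_mul_left]
  exact (ENNReal.tsum_le_tsum (le_sum_dyadicBlock_sq τ ht)).trans
    (ENNReal.tsum_sum_le_tsum_of_pairwise_disjoint hdisj _)
end
end

section
/- Fix t > 1. Then Σ_{b ∈ I_τ} |b|^{−2t} tends to 0 as τ → ∞ in A₀: for every ε > 0 there exists N > 0 such that for all τ ∈ A₀ with |τ| ≥ N, one has Σ_{(m,n) ∈ ℕ₊×ℕ₊} |m + nτ|^{−2t} < ε. -/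
open Complex Metric Filter Set
open scoped ENNReal NNReal Topology

noncomputable section

/-!
Since `Re τ ≥ 0`, `|m + nτ|² ≥ m² + n²|τ|² ≥ mn|τ|`, so every term is at most
`|τ|^{-t} m^{-t} n^{-t}` and the double sum is at most `|τ|^{-t} ζ(t)²`, which tends to `0`.
-/

lemma mul_mul_norm_le_norm_add_mul_sq {τ : ℂ} (hτ : 0 ≤ τ.re) {m n : ℝ} (hm : 0 ≤ m)
    (hn : 0 ≤ n) : m * n * ‖τ‖ ≤ ‖(m : ℂ) + n * τ‖ ^ 2 := by
  have hnorm : ‖(m : ℂ) + n * τ‖ ^ 2 = m ^ 2 + 2 * m * n * τ.re + n ^ 2 * ‖τ‖ ^ 2 := by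
    simp only [Complex.sq_norm, normSq_apply, add_re, add_im, mul_re, mul_im, ofReal_re, ofReal_im]
    ring
  rw [hnorm]
  nlinarith [sq_nonneg (m - n * ‖τ‖), mul_nonneg (mul_nonneg hm hn) hτ,
    mul_nonneg (mul_nonneg hm hn) (norm_nonneg τ)]

lemma tsum_pnat_rpow_neg_ne_top {t : ℝ} (ht : 1 < t) :
    ∑' n : ℕ+, ((n : ℕ) : ℝ≥0∞) ^ (-t) ≠ ∞ := by
  have hcoe (n : ℕ+) : ((n : ℕ) : ℝ≥0∞) ^ (-t) = (((n : ℕ) : ℝ≥0) ^ (-t) : ℝ≥0) := by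
    rw [ENNReal.coe_rpow_of_ne_zero (by exact_mod_cast n.ne_zero), ENNReal.coe_natCast]
  rw [tsum_congr hcoe, ENNReal.tsum_coe_ne_top_iff_summable]
  exact NNReal.summable_comp_injective (NNReal.summable_rpow.2 (neg_lt_neg ht))
    PNat.coe_injective

lemma nnnorm_natCast_add_mul_rpow_neg_le {τ : ℂ} (hτ : 0 ≤ τ.re) (hτ0 : τ ≠ 0) {t : ℝ}
    (ht : 0 ≤ t) (m n : ℕ+) :
    (‖((m : ℕ) : ℂ) + ((n : ℕ) : ℂ) * τ‖₊ : ℝ≥0∞) ^ (-(2 * t)) ≤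
      (‖τ‖₊ : ℝ≥0∞) ^ (-t) * (((m : ℕ) : ℝ≥0∞) ^ (-t) * ((n : ℕ) : ℝ≥0∞) ^ (-t)) := by
  have hm : ((m : ℕ) : ℝ≥0∞) ≠ 0 := by exact_mod_cast m.ne_zero
  have hn : ((n : ℕ) : ℝ≥0∞) ≠ 0 := by exact_mod_cast n.ne_zero
  have hkey : ((m : ℕ) : ℝ≥0∞) * (n : ℕ) * ‖τ‖₊ ≤
      (‖((m : ℕ) : ℂ) + ((n : ℕ) : ℂ) * τ‖₊ : ℝ≥0∞) ^ 2 := by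
    rw [← ENNReal.coe_natCast, ← ENNReal.coe_natCast, ← ENNReal.coe_mul, ← ENNReal.coe_mul,
      ← ENNReal.coe_pow, ENNReal.coe_le_coe, ← NNReal.coe_le_coe]
    push_cast
    exact_mod_cast mul_mul_norm_le_norm_add_mul_sq hτ (Nat.cast_nonneg (m : ℕ))
      (Nat.cast_nonneg (n : ℕ))
  calc (‖((m : ℕ) : ℂ) + ((n : ℕ) : ℂ) * τ‖₊ : ℝ≥0∞) ^ (-(2 * t))
      = ((‖((m : ℕ) : ℂ) + ((n : ℕ) : ℂ) * τ‖₊ : ℝ≥0∞) ^ 2) ^ (-t) := by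
        rw [← ENNReal.rpow_natCast, ← ENNReal.rpow_mul]
        norm_num
    _ ≤ (((m : ℕ) : ℝ≥0∞) * (n : ℕ) * ‖τ‖₊) ^ (-t) := by
        rw [ENNReal.rpow_neg, ENNReal.rpow_neg]
        exact ENNReal.inv_le_inv.2 (ENNReal.rpow_le_rpow hkey ht)
    _ = _ := by
      rw [ENNReal.mul_rpow_of_ne_zero (mul_ne_zero hm hn) (by simpa using hτ0),
        ENNReal.mul_rpow_of_ne_zero hm hn, mul_comm]

lemma tsum_nnnorm_natCast_add_mul_rpow_neg_le {τ : ℂ} (hτ : 0 ≤ τ.re) (hτ0 : τ ≠ 0) {t : ℝ}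
    (ht : 0 ≤ t) :
    ∑' p : ℕ+ × ℕ+, (‖((p.1 : ℕ) : ℂ) + ((p.2 : ℕ) : ℂ) * τ‖₊ : ℝ≥0∞) ^ (-(2 * t)) ≤
      (‖τ‖₊ : ℝ≥0∞) ^ (-t) * (∑' n : ℕ+, ((n : ℕ) : ℝ≥0∞) ^ (-t)) ^ 2 := by
  calc _ ≤ ∑' p : ℕ+ × ℕ+,
          (‖τ‖₊ : ℝ≥0∞) ^ (-t) * (((p.1 : ℕ) : ℝ≥0∞) ^ (-t) * ((p.2 : ℕ) : ℝ≥0∞) ^ (-t)) :=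
        ENNReal.tsum_le_tsum fun p ↦ nnnorm_natCast_add_mul_rpow_neg_le hτ hτ0 ht p.1 p.2
    _ = _ := by
      rw [ENNReal.tsum_mul_left, ENNReal.tsum_prod', sq]
      simp_rw [ENNReal.tsum_mul_left, ENNReal.tsum_mul_right]

/-- For fixed `t > 1`, `Σ_{b ∈ I_τ} |b|^{-2t} → 0` as `τ → ∞` in `A₀`. -/
theorem stmt8 :
    ∀ t : ℝ, 1 < t → ∀ ε : ℝ, 0 < ε → ∃ N : ℝ, 0 < N ∧
      ∀ τ ∈ A0, N ≤ ‖τ‖ →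
        (∑' p : ℕ+ × ℕ+,
            ((‖((p.1 : ℕ) : ℂ) + ((p.2 : ℕ) : ℂ) * τ‖₊ : ℝ≥0∞) ^ (-(2 * t)))) <
          ENNReal.ofReal ε := by
  intro t ht ε hε
  set C := ∑' n : ℕ+, ((n : ℕ) : ℝ≥0∞) ^ (-t)
  have hdecay : Tendsto (fun x : ℝ ↦ x ^ (-t) * (C ^ 2).toReal) atTop (𝓝 0) := by
    simpa only [zero_mul] using
      (tendsto_rpow_neg_atTop (by linarith : 0 < t)).mul_const (C ^ 2).toReal
  obtain ⟨N, hN⟩ := eventually_atTop.1 (hdecay.eventually (gt_mem_nhds hε))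
  refine ⟨max N 1, by positivity, fun τ hτ hNτ ↦ ?_⟩
  have hτpos : 0 < ‖τ‖ := lt_of_lt_of_le one_pos (le_of_max_le_right hNτ)
  calc _ ≤ (‖τ‖₊ : ℝ≥0∞) ^ (-t) * C ^ 2 :=
        tsum_nnnorm_natCast_add_mul_rpow_neg_le hτ.1 (norm_pos_iff.1 hτpos) (by linarith)
    _ = ENNReal.ofReal (‖τ‖ ^ (-t) * (C ^ 2).toReal) := by
        rw [ENNReal.ofReal_mul (by positivity), ← ENNReal.ofReal_rpow_of_pos hτpos, ofReal_norm,
          enorm_eq_nnnorm,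
          ENNReal.ofReal_toReal (ENNReal.pow_ne_top (tsum_pnat_rpow_neg_ne_top ht))]
    _ < ENNReal.ofReal ε := (ENNReal.ofReal_lt_ofReal_iff hε).2 (hN _ (le_of_max_le_left hNτ))
end
end

section
/- Let τ ∈ A₀ and let (τ_k)_{k∈ℕ} be a sequence in A₀ with τ_k → τ. Then there exist K ∈ ℕ and constants C₁ > 0 and C₂ > 0 such that for all k ≥ K, all (m, n) ∈ ℕ₊ × ℕ₊, and all z, z′ ∈ X, one has C₁ ≤ |z′ + m + nτ_k|² / |z + m + nτ|² ≤ C₂. -/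
open Complex Metric Filter Set
open scoped ENNReal NNReal Topology

noncomputable section

lemma neg_half_le_im_of_mem_Xcl {z : ℂ} (hz : z ∈ Xcl) : -1/2 ≤ z.im := by
  have h := (abs_im_le_norm (z - 1/2)).trans hz
  simp only [sub_im, div_ofNat_im, one_im, zero_div, sub_zero] at h
  linarith [neg_abs_le z.im]

lemma norm_le_one_of_mem_Xcl {z : ℂ} (hz : z ∈ Xcl) : ‖z‖ ≤ 1 :=
  calc ‖z‖ ≤ ‖z - 1/2‖ + ‖(1/2 : ℂ)‖ := norm_le_norm_sub_add z _
    _ ≤ 1/2 + 1/2 := add_le_add hz (by norm_num)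
    _ = 1 := by norm_num

lemma quarter_mul_sq_add_sq_le_norm_sq {σ z : ℂ} (hσ : σ ∈ A0) (hz_re : 0 ≤ z.re)
    (hz_im : -1/2 ≤ z.im) (m : ℕ) {n : ℕ} (hn : 1 ≤ n) :
    1/4 * ((m : ℝ) ^ 2 + (n : ℝ) ^ 2) ≤ ‖z + (m : ℂ) + (n : ℂ) * σ‖ ^ 2 := by
  obtain ⟨hσ_re, hσ_im⟩ := hσ
  have hn' : (1 : ℝ) ≤ n := by exact_mod_cast hn
  set w := z + (m : ℂ) + (n : ℂ) * σ
  have hw_re : (m : ℝ) ≤ w.re := by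
    have : w.re = z.re + m + n * σ.re := by simp [w]
    nlinarith
  have hw_im : (n : ℝ) / 2 ≤ w.im := by
    have : w.im = z.im + n * σ.im := by simp [w]
    nlinarith
  rw [Complex.sq_norm, normSq_apply]
  nlinarith [Nat.cast_nonneg (α := ℝ) m]

lemma norm_sq_le_sq_add_sq {σ z : ℂ} {R : ℝ} (hσ : ‖σ‖ ≤ R) (hz : ‖z‖ ≤ 1) (m : ℕ) {n : ℕ}
    (hn : 1 ≤ n) :
    ‖z + (m : ℂ) + (n : ℂ) * σ‖ ^ 2 ≤ 2 * (1 + R) ^ 2 * ((m : ℝ) ^ 2 + (n : ℝ) ^ 2) := by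
  have hn' : (1 : ℝ) ≤ n := by exact_mod_cast hn
  have hm : (0 : ℝ) ≤ m := Nat.cast_nonneg m
  have hR : 0 ≤ R := (norm_nonneg σ).trans hσ
  have hnorm : ‖z + (m : ℂ) + (n : ℂ) * σ‖ ≤ (1 + R) * (m + n) :=
    calc ‖z + (m : ℂ) + (n : ℂ) * σ‖ ≤ ‖z‖ + ‖(m : ℂ)‖ + ‖(n : ℂ) * σ‖ := norm_add₃_le
      _ = ‖z‖ + m + n * ‖σ‖ := by simp
      _ ≤ (1 + R) * (m + n) := by nlinarith
  calc ‖z + (m : ℂ) + (n : ℂ) * σ‖ ^ 2 ≤ ((1 + R) * (m + n)) ^ 2 :=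
        pow_le_pow_left₀ (norm_nonneg _) hnorm 2
    _ ≤ 2 * (1 + R) ^ 2 * ((m : ℝ) ^ 2 + (n : ℝ) ^ 2) := by
        nlinarith [sq_nonneg ((m : ℝ) - n), sq_nonneg (1 + R)]

lemma div_mem_Icc_of_mem_Icc {N D S c C : ℝ} (hc : 0 < c) (hS : 0 < S)
    (hN : N ∈ Icc (c * S) (C * S)) (hD : D ∈ Icc (c * S) (C * S)) :
    c / C ≤ N / D ∧ N / D ≤ C / c := by
  have hcS : 0 < c * S := mul_pos hc hS
  have hCS : 0 < C * S := hcS.trans_le (hD.1.trans hD.2)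
  have hC : 0 < C := pos_of_mul_pos_left hCS hS.le
  constructor
  · calc c / C = c * S / (C * S) := (mul_div_mul_right c C hS.ne').symm
      _ ≤ N / D := div_le_div₀ (hcS.le.trans hN.1) hN.1 (hcS.trans_le hD.1) hD.2
  · calc N / D ≤ C * S / (c * S) := div_le_div₀ hCS.le hN.2 hcS hD.1
      _ = C / c := mul_div_mul_right C c hS.ne'

/-- Uniform two-sided bound on the ratios `|z' + m + nτ_k|²/|z + m + nτ|²`. -/
theorem stmt9 :
    ∀ τ ∈ A0, ∀ τseq : ℕ → ℂ, (∀ k, τseq k ∈ A0) →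
      Tendsto τseq atTop (𝓝 τ) →
      ∃ K : ℕ, ∃ C₁ C₂ : ℝ, 0 < C₁ ∧ 0 < C₂ ∧
        ∀ k, K ≤ k → ∀ m n : ℕ+, ∀ z ∈ Xcl, ∀ z' ∈ Xcl,
          C₁ ≤ ‖z' + ((m : ℕ) : ℂ) + ((n : ℕ) : ℂ) * τseq k‖ ^ 2 /
                ‖z + ((m : ℕ) : ℂ) + ((n : ℕ) : ℂ) * τ‖ ^ 2 ∧
          ‖z' + ((m : ℕ) : ℂ) + ((n : ℕ) : ℂ) * τseq k‖ ^ 2 /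
                ‖z + ((m : ℕ) : ℂ) + ((n : ℕ) : ℂ) * τ‖ ^ 2 ≤ C₂ := by
  intro τ hτ τseq hseq hconv
  obtain ⟨K, hK⟩ := eventually_atTop.mp
    (hconv.norm.eventually (eventually_le_nhds (lt_add_one ‖τ‖)))
  set C := 2 * (1 + (‖τ‖ + 1)) ^ 2
  refine ⟨K, 1/4 / C, C / (1/4), by positivity, by positivity, ?_⟩
  intro k hk m n z hz z' hz'
  have hn : 1 ≤ (n : ℕ) := n.pos
  have hS : 0 < ((m : ℕ) : ℝ) ^ 2 + ((n : ℕ) : ℝ) ^ 2 := by positivity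
  have bounds : ∀ σ ∈ A0, ‖σ‖ ≤ ‖τ‖ + 1 → ∀ w ∈ Xcl,
      ‖w + ((m : ℕ) : ℂ) + ((n : ℕ) : ℂ) * σ‖ ^ 2 ∈
        Icc (1/4 * (((m : ℕ) : ℝ) ^ 2 + ((n : ℕ) : ℝ) ^ 2))
          (C * (((m : ℕ) : ℝ) ^ 2 + ((n : ℕ) : ℝ) ^ 2)) := fun σ hσ hσR w hw =>
    ⟨quarter_mul_sq_add_sq_le_norm_sq hσ (re_nonneg_of_mem_Xcl hw) (neg_half_le_im_of_mem_Xcl hw) _ hn,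
      norm_sq_le_sq_add_sq hσR (norm_le_one_of_mem_Xcl hw) _ hn⟩
  exact div_mem_Icc_of_mem_Icc (by norm_num) hS
    (bounds _ (hseq k) (hK k hk) z' hz') (bounds τ hτ (by linarith [norm_nonneg τ]) z hz)
end
end
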